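/- If a compact set K ⊆ ℝⁿ satisfies k·pdim(K) < k·n − 1 for some positive integer k, and the k-fold product K^k has Hausdorff dimension at least k·n − 1, then a contradiction follows; equivalently: if every Besicovitch set in ℝ^{kn} has Hausdorff dimension at least kn − 1 for all k, then a Besicovitch set B in ℝⁿ satisfies pdim(B) = n. -/

import Mathlib

open Set Filter MeasureTheory

/-- A Besicovitch set in ℝᵏ: a compact set containing a unit line segment
in every direction. -/
def IsBesicovitch {k : ℕ} (K : Set (EuclideanSpace ℝ (Fin k))) : Prop :=
  IsCompact K ∧ ∀ e : EuclideanSpace ℝ (Fin k), ‖e‖ = 1 →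
    ∃ x, ∀ t ∈ Icc (0 : ℝ) 1, x + t • e ∈ K

/-- Upper Minkowski (box-counting) dimension of a subset of ℝᵏ, via the volume of
`ε`-neighbourhoods. -/
noncomputable def ubDim {k : ℕ} (A : Set (EuclideanSpace ℝ (Fin k))) : ℝ :=
  k - liminf (fun ε : ℝ =>
    Real.log ((volume (Metric.thickening ε A)).toReal) / Real.log ε) (nhdsWithin 0 (Ioi 0))

/-- Packing dimension, defined from upper Minkowski dimension by countable
decompositions. -/
noncomputable def pdim {k : ℕ} (A : Set (EuclideanSpace ℝ (Fin k))) : ℝ :=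
  sInf {r : ℝ | ∃ E : ℕ → Set (EuclideanSpace ℝ (Fin k)),
    A ⊆ ⋃ i, E i ∧ ∀ i, Bornology.IsBounded (E i) ∧ ubDim (E i) ≤ r}

/-!
If `pdim B < n`, then `B` is covered by countably many bounded sets `Eⱼ` of upper Minkowski
dimension `< t < n`. Comparing the volume of `thickening ε Eⱼ` with disjoint balls of radius
`ε / 2` around an `ε`-separated set shows that `Eⱼ` has covering numbers `O(ε^{-t})`. Covering
numbers are submultiplicative on products, so every product `E_{σ 1} × ⋯ × E_{σ k}` has
Hausdorff dimension at most `k t`, hence so has `Bᵏ`, which lies in the countable union of these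
products. But `Bᵏ`, read in `ℝ^{kn}`, is a Besicovitch set, so `k n - 1 ≤ k t`, which fails for
`k` large.
-/

open Metric Bornology
open scoped NNReal ENNReal Topology

namespace Metric

/-- `coveringNumber ε A = O(ε^{-t})` as `ε → 0`. -/
def HasCoveringBound {X : Type*} [PseudoEMetricSpace X] (A : Set X) (t : ℝ≥0) : Prop :=
  ∃ C : ℝ≥0∞, C ≠ ∞ ∧
    ∀ᶠ ε in 𝓝[>] (0 : ℝ≥0), (coveringNumber ε A : ℝ≥0∞) * (ε : ℝ≥0∞) ^ (t : ℝ) ≤ C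

lemma coveringNumber_ne_top_of_mul_rpow_le {X : Type*} [PseudoEMetricSpace X] {A : Set X}
    {ε : ℝ≥0} (hε : 0 < ε) {t : ℝ≥0} {C : ℝ≥0∞} (hC : C ≠ ∞)
    (h : (coveringNumber ε A : ℝ≥0∞) * (ε : ℝ≥0∞) ^ (t : ℝ) ≤ C) :
    coveringNumber ε A ≠ ⊤ := by
  have hpos : (ε : ℝ≥0∞) ^ (t : ℝ) ≠ 0 :=
    (ENNReal.rpow_pos (by simpa using hε) ENNReal.coe_ne_top).ne'
  intro htop
  rw [htop, ENat.toENNReal_top, ENNReal.top_mul hpos] at h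
  exact hC (top_le_iff.1 h)

lemma coveringNumber_pi_le {ι : Type*} [Fintype ι] {X : ι → Type*}
    [∀ i, PseudoEMetricSpace (X i)] {A : ∀ i, Set (X i)} {ε : ℝ≥0}
    (h : ∀ i, coveringNumber ε (A i) ≠ ⊤) :
    coveringNumber ε (univ.pi A) ≤ ∏ i, coveringNumber ε (A i) := by
  have hcover : IsCover ε (univ.pi A) (univ.pi fun i => minimalCover ε (A i)) := by
    intro x hx
    choose c hc hxc using fun i => isCover_minimalCover (h i) (hx i (mem_univ i))
    exact ⟨c, fun i _ => hc i, edist_pi_le_iff.2 hxc⟩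
  calc coveringNumber ε (univ.pi A)
      ≤ (univ.pi fun i => minimalCover ε (A i)).encard :=
        hcover.coveringNumber_le_encard (pi_mono fun _ _ => minimalCover_subset)
    _ = ∏ i, coveringNumber ε (A i) := by
        simp only [encard_pi_eq_prod_encard, encard_minimalCover (h _)]

lemma HasCoveringBound.pi {ι : Type*} [Fintype ι] {X : ι → Type*}
    [∀ i, PseudoEMetricSpace (X i)] {A : ∀ i, Set (X i)} {t : ℝ≥0}
    (h : ∀ i, HasCoveringBound (A i) t) :
    HasCoveringBound (univ.pi A) (Fintype.card ι * t) := by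
  choose C hC hA using h
  refine ⟨∏ i, C i, ENNReal.prod_ne_top fun i _ => hC i, ?_⟩
  filter_upwards [eventually_all.2 hA, self_mem_nhdsWithin] with ε hε (hε0 : 0 < ε)
  have hfin i := coveringNumber_ne_top_of_mul_rpow_le hε0 (hC i) (hε i)
  calc (coveringNumber ε (univ.pi A) : ℝ≥0∞) * (ε : ℝ≥0∞) ^ ((Fintype.card ι * t : ℝ≥0) : ℝ)
      ≤ (∏ i, (coveringNumber ε (A i) : ℝ≥0∞)) * ∏ _i : ι, (ε : ℝ≥0∞) ^ (t : ℝ) := by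
        gcongr
        · exact_mod_cast ENat.toENNReal_mono (coveringNumber_pi_le hfin) |>.trans_eq
            (map_prod ENat.toENNRealRingHom _ _)
        · rw [Finset.prod_const, Finset.card_univ, ← ENNReal.rpow_natCast, ← ENNReal.rpow_mul,
            NNReal.coe_mul, NNReal.coe_natCast, mul_comm]
    _ = ∏ i, (coveringNumber ε (A i) : ℝ≥0∞) * (ε : ℝ≥0∞) ^ (t : ℝ) :=
        (Finset.prod_mul_distrib).symm
    _ ≤ ∏ i, C i := Finset.prod_le_prod' fun i _ => hε i

lemma HasCoveringBound.dimH_le {X : Type*} [EMetricSpace X] {A : Set X} {t : ℝ≥0}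
    (h : HasCoveringBound A t) : dimH A ≤ t := by
  borelize X
  obtain ⟨C, hC, hA⟩ := h
  have : ∀ ε, Countable (minimalCover ε A) := fun ε => finite_minimalCover.countable.to_subtype
  have hμ : μH[t] A ≤ 2 ^ (t : ℝ) * C := by
    refine (Measure.hausdorffMeasure_le_liminf_tsum (t : ℝ) A (l := 𝓝[>] 0)
      (fun ε : ℝ≥0 => 2 * (ε : ℝ≥0∞)) ?_
      (fun ε (x : minimalCover ε A) => closedEBall (x : X) (ε : ℝ≥0∞)) ?_ ?_).trans ?_
    · have : Tendsto (fun ε : ℝ≥0 => (ε : ℝ≥0∞)) (𝓝[>] 0) (𝓝 0) :=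
        ENNReal.tendsto_coe.2 (tendsto_nhdsWithin_of_tendsto_nhds tendsto_id)
      simpa using ENNReal.Tendsto.const_mul this (Or.inr ENNReal.ofNat_ne_top)
    · exact Eventually.of_forall fun ε x => ediam_closedEBall_le
    · filter_upwards [hA, self_mem_nhdsWithin] with ε hε (hε0 : 0 < ε)
      have := isCover_minimalCover (coveringNumber_ne_top_of_mul_rpow_le hε0 hC hε)
      rw [isCover_iff_subset_iUnion_closedEBall] at this
      simpa [iUnion_subtype] using this
    · refine liminf_le_of_frequently_le' (Eventually.frequently ?_)
      filter_upwards [hA, self_mem_nhdsWithin] with ε hε (hε0 : 0 < ε)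
      have hfin := coveringNumber_ne_top_of_mul_rpow_le hε0 hC hε
      calc ∑' x : minimalCover ε A, ediam (closedEBall (x : X) ε) ^ (t : ℝ)
          ≤ ∑' _x : minimalCover ε A, (2 * (ε : ℝ≥0∞)) ^ (t : ℝ) := by
            gcongr; exact ediam_closedEBall_le
        _ = 2 ^ (t : ℝ) * ((coveringNumber ε A : ℝ≥0∞) * (ε : ℝ≥0∞) ^ (t : ℝ)) := by
            rw [ENNReal.tsum_set_const, encard_minimalCover hfin,
              ENNReal.mul_rpow_of_nonneg _ _ t.coe_nonneg]
            ring
        _ ≤ 2 ^ (t : ℝ) * C := by gcongr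
  exact dimH_le_of_hausdorffMeasure_ne_top
    (ne_top_of_le_ne_top (ENNReal.mul_ne_top (by simp) hC) hμ)

section AddHaar

variable {E : Type*} [NormedAddCommGroup E] [MeasurableSpace E] [BorelSpace E]
  (μ : Measure E) [μ.IsAddHaarMeasure]

lemma IsSeparated.encard_mul_measure_ball_le {ε : ℝ≥0} {A C : Set E} (hCA : C ⊆ A)
    (hC : IsSeparated (ε : ℝ≥0∞) C) :
    (C.encard : ℝ≥0∞) * μ (ball 0 (ε / 2)) ≤ μ (thickening ε A) := by
  have hdisj : C.PairwiseDisjoint fun c => ball c (ε / 2) := fun x hx y hy hxy =>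
    ball_disjoint_ball <| by
      have : (ε : ℝ≥0∞) < edist x y := hC hx hy hxy
      rw [edist_nndist, ENNReal.coe_lt_coe, ← NNReal.coe_lt_coe, coe_nndist] at this
      linarith
  rw [← ENNReal.tsum_set_const, ENNReal.tsum_eq_iSup_sum]
  refine iSup_le fun s => ?_
  calc ∑ c ∈ s, μ (ball (0 : E) (ε / 2))
      = μ (⋃ c ∈ s, ball (c : E) (ε / 2)) := by
        rw [measure_biUnion_finset (fun (x : C) _ (y : C) _ hxy =>
          hdisj x.2 y.2 (Subtype.coe_injective.ne hxy)) fun _ _ => measurableSet_ball]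
        simp only [Measure.addHaar_ball_center]
    _ ≤ μ (thickening ε A) := measure_mono <| iUnion₂_subset fun c _ =>
        (ball_subset_ball (by linarith [ε.coe_nonneg])).trans
          (ball_subset_thickening (hCA c.2) _)

lemma packingNumber_mul_measure_ball_le (ε : ℝ≥0) (A : Set E) :
    (packingNumber ε A : ℝ≥0∞) * μ (ball 0 (ε / 2)) ≤ μ (thickening ε A) := by
  simp only [packingNumber, ENat.toENNReal_iSup, ENNReal.iSup_mul, iSup_le_iff]
  exact fun C hCA hC => IsSeparated.encard_mul_measure_ball_le μ hCA hC

end AddHaar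

end Metric

section UpperBoxDim

variable {m : ℕ} {A : Set (EuclideanSpace ℝ (Fin m))}

noncomputable def thickeningLogRatio (A : Set (EuclideanSpace ℝ (Fin m))) (ε : ℝ) : ℝ :=
  Real.log (volume (thickening ε A)).toReal / Real.log ε

lemma ubDim_eq_sub_liminf :
    ubDim A = m - liminf (thickeningLogRatio A) (𝓝[>] 0) := rfl

lemma tendsto_log_div_log_nhdsGT_zero (c : ℝ) :
    Tendsto (fun ε => Real.log c / Real.log ε) (𝓝[>] 0) (𝓝 0) :=
  tendsto_const_nhds.div_atBot Real.tendsto_log_nhdsGT_zero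

lemma ofReal_pow_mul_volume_ball_le_volume_thickening (hne : A.Nonempty) {ε : ℝ} (hε : 0 < ε) :
    ENNReal.ofReal (ε ^ m) * volume (ball (0 : EuclideanSpace ℝ (Fin m)) 1) ≤
      volume (thickening ε A) := by
  obtain ⟨a, ha⟩ := hne
  calc ENNReal.ofReal (ε ^ m) * volume (ball (0 : EuclideanSpace ℝ (Fin m)) 1)
      = volume (ball a ε) := by
        rw [Measure.addHaar_ball_of_pos _ _ hε, finrank_euclideanSpace_fin]
    _ ≤ volume (thickening ε A) := measure_mono (ball_subset_thickening ha ε)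

lemma volume_thickening_ne_top (hA : IsBounded A) (ε : ℝ) : volume (thickening ε A) ≠ ∞ :=
  hA.thickening.measure_lt_top.ne

lemma toReal_volume_thickening_pos (hne : A.Nonempty) (hA : IsBounded A) {ε : ℝ} (hε : 0 < ε) :
    0 < (volume (thickening ε A)).toReal :=
  ENNReal.toReal_pos (pos_iff_ne_zero.1 <| lt_of_lt_of_le
    (ENNReal.mul_pos (by simp [hε]) (measure_ball_pos _ _ one_pos).ne')
    (ofReal_pow_mul_volume_ball_le_volume_thickening hne hε)) (volume_thickening_ne_top hA ε)

lemma eventually_log_div_log_le_thickeningLogRatio (hne : A.Nonempty) (hA : IsBounded A) :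
    ∀ᶠ ε in 𝓝[>] 0,
      Real.log (volume (thickening 1 A)).toReal / Real.log ε ≤ thickeningLogRatio A ε := by
  filter_upwards [Ioo_mem_nhdsGT zero_lt_one] with ε ⟨hε0, hε1⟩
  refine div_le_div_of_nonpos_of_le (Real.log_neg hε0 hε1).le <|
    Real.log_le_log (toReal_volume_thickening_pos hne hA hε0) <|
      ENNReal.toReal_mono (volume_thickening_ne_top hA 1) (measure_mono ?_)
  exact thickening_mono hε1.le A

lemma eventually_thickeningLogRatio_le (hne : A.Nonempty) (hA : IsBounded A) :
    ∀ᶠ ε in 𝓝[>] 0, thickeningLogRatio A ε ≤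
      m + Real.log (volume (ball (0 : EuclideanSpace ℝ (Fin m)) 1)).toReal / Real.log ε := by
  set c := (volume (ball (0 : EuclideanSpace ℝ (Fin m)) 1)).toReal
  have hc : 0 < c := ENNReal.toReal_pos (measure_ball_pos _ _ one_pos).ne' measure_ball_lt_top.ne
  filter_upwards [Ioo_mem_nhdsGT zero_lt_one] with ε ⟨hε0, hε1⟩
  have hlog : Real.log ε < 0 := Real.log_neg hε0 hε1
  have hvol : ε ^ m * c ≤ (volume (thickening ε A)).toReal := by
    have := ENNReal.toReal_mono (volume_thickening_ne_top hA ε)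
      (ofReal_pow_mul_volume_ball_le_volume_thickening hne hε0)
    rwa [ENNReal.toReal_mul, ENNReal.toReal_ofReal (by positivity)] at this
  have hlogvol := Real.log_le_log (by positivity) hvol
  rw [Real.log_mul (by positivity) hc.ne', Real.log_pow] at hlogvol
  calc thickeningLogRatio A ε ≤ (m * Real.log ε + Real.log c) / Real.log ε :=
        div_le_div_of_nonpos_of_le hlog.le hlogvol
    _ = m + Real.log c / Real.log ε := by rw [add_div, mul_div_cancel_right₀ _ hlog.ne]

lemma isBoundedUnder_ge_thickeningLogRatio (hne : A.Nonempty) (hA : IsBounded A) :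
    IsBoundedUnder (· ≥ ·) (𝓝[>] 0) (thickeningLogRatio A) :=
  isBoundedUnder_of_eventually_ge <|
    ((tendsto_log_div_log_nhdsGT_zero _).eventually (eventually_ge_nhds neg_one_lt_zero)).and
      (eventually_log_div_log_le_thickeningLogRatio hne hA) |>.mono fun _ h => h.1.trans h.2

lemma ubDim_le_of_isBounded (hne : A.Nonempty) (hA : IsBounded A) : ubDim A ≤ m := by
  have hlower := tendsto_log_div_log_nhdsGT_zero (volume (thickening 1 A)).toReal
  have hupper := (tendsto_log_div_log_nhdsGT_zero
    (volume (ball (0 : EuclideanSpace ℝ (Fin m)) 1)).toReal).eventually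
      (eventually_le_nhds zero_lt_one)
  have hco : IsCoboundedUnder (· ≥ ·) (𝓝[>] 0) (thickeningLogRatio A) :=
    isCoboundedUnder_ge_of_eventually_le _ <|
      (eventually_thickeningLogRatio_le hne hA).and hupper |>.mono fun _ h =>
        h.1.trans (add_le_add_right h.2 _)
  have hliminf := liminf_le_liminf (eventually_log_div_log_le_thickeningLogRatio hne hA)
    hlower.isBoundedUnder_ge hco
  rw [hlower.liminf_eq] at hliminf
  rw [ubDim_eq_sub_liminf]
  linarith

lemma eventually_volume_thickening_le_rpow (hA : IsBounded A) {q : ℝ} (hq : q + ubDim A < m) :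
    ∀ᶠ ε in 𝓝[>] 0, volume (thickening ε A) ≤ ENNReal.ofReal (ε ^ q) := by
  rcases A.eq_empty_or_nonempty with rfl | hne
  · simp
  have hlt : q < liminf (thickeningLogRatio A) (𝓝[>] 0) := by
    rw [ubDim_eq_sub_liminf] at hq; linarith
  filter_upwards [eventually_lt_of_lt_liminf hlt (isBoundedUnder_ge_thickeningLogRatio hne hA),
    Ioo_mem_nhdsGT zero_lt_one] with ε hratio ⟨hε0, hε1⟩
  have hvol := toReal_volume_thickening_pos hne hA hε0
  have hlog : Real.log (volume (thickening ε A)).toReal < Real.log (ε ^ q) := by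
    rw [Real.log_rpow hε0]
    exact (lt_div_iff_of_neg (Real.log_neg hε0 hε1)).1 hratio
  rw [← ENNReal.ofReal_toReal (volume_thickening_ne_top hA ε)]
  exact ENNReal.ofReal_le_ofReal ((Real.log_lt_log_iff hvol (by positivity)).1 hlog).le

lemma hasCoveringBound_of_ubDim_lt (hA : IsBounded A) {t : ℝ≥0} (ht : ubDim A < t) :
    HasCoveringBound A t := by
  set c := (volume (ball (0 : EuclideanSpace ℝ (Fin m)) 1)).toReal
  have hc : 0 < c := ENNReal.toReal_pos (measure_ball_pos _ _ one_pos).ne' measure_ball_lt_top.ne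
  refine ⟨ENNReal.ofReal (2 ^ m / c), ENNReal.ofReal_ne_top, ?_⟩
  have hdecay := eventually_volume_thickening_le_rpow hA (q := m - t) (by linarith)
  rw [← NNReal.coe_zero, ← NNReal.map_coe_nhdsGT] at hdecay
  filter_upwards [hdecay, self_mem_nhdsWithin] with ε hε (hε0 : 0 < ε)
  have hε0' : (0 : ℝ) < ε := hε0
  have hball : volume (ball (0 : EuclideanSpace ℝ (Fin m)) (ε / 2)) =
      ENNReal.ofReal ((ε / 2) ^ m * c) := by
    rw [Measure.addHaar_ball_of_pos _ _ (by positivity), finrank_euclideanSpace_fin,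
      ENNReal.ofReal_mul (by positivity), ENNReal.ofReal_toReal measure_ball_lt_top.ne]
  have hpack := (mul_le_mul_left (ENat.toENNReal_mono (coveringNumber_le_packingNumber ε A)) _
    |>.trans (packingNumber_mul_measure_ball_le volume ε A) |>.trans hε)
  rw [hball] at hpack
  have hN : coveringNumber ε A ≠ ⊤ := by
    intro htop
    rw [htop, ENat.toENNReal_top, ENNReal.top_mul (by simp; positivity)] at hpack
    simp at hpack
  lift coveringNumber ε A to ℕ using hN with N
  rw [ENat.toENNReal_coe, ← ENNReal.ofReal_natCast, ← ENNReal.ofReal_mul (by positivity),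
    ENNReal.ofReal_le_ofReal_iff (by positivity)] at hpack
  rw [ENat.toENNReal_coe, ← ENNReal.ofReal_natCast, ← ENNReal.ofReal_coe_nnreal,
    ENNReal.ofReal_rpow_of_pos hε0', ← ENNReal.ofReal_mul (by positivity)]
  refine ENNReal.ofReal_le_ofReal <|
    (le_div_iff₀ hc).2 (le_of_mul_le_mul_right ?_ (pow_pos hε0' m))
  calc N * ε ^ (t : ℝ) * c * ε ^ m = N * ((ε / 2) ^ m * c) * ε ^ (t : ℝ) * 2 ^ m := by
        rw [div_pow]; field_simp
    _ ≤ ε ^ ((m : ℝ) - t) * ε ^ (t : ℝ) * 2 ^ m := by gcongr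
    _ = 2 ^ m * ε ^ m := by
      rw [← Real.rpow_add hε0', sub_add_cancel, Real.rpow_natCast, mul_comm]

lemma dimH_pi_le_of_subset_iUnion {ι κ : Type*} [Fintype ι] [Countable κ]
    {B : Set (EuclideanSpace ℝ (Fin m))} {E : κ → Set (EuclideanSpace ℝ (Fin m))}
    (hBE : B ⊆ ⋃ j, E j) (hE : ∀ j, IsBounded (E j)) {t : ℝ≥0} (ht : ∀ j, ubDim (E j) < t) :
    dimH (univ.pi fun _ : ι => B) ≤ (Fintype.card ι * t : ℝ≥0) := calc
  dimH (univ.pi fun _ : ι => B) ≤ dimH (⋃ σ : ι → κ, univ.pi fun i => E (σ i)) :=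
    dimH_mono fun x hx => mem_iUnion.2 <| by
      choose σ hσ using fun i => mem_iUnion.1 (hBE (hx i (mem_univ i)))
      exact ⟨σ, fun i _ => hσ i⟩
  _ = ⨆ σ : ι → κ, dimH (univ.pi fun i => E (σ i)) := dimH_iUnion _
  _ ≤ (Fintype.card ι * t : ℝ≥0) := iSup_le fun σ =>
    (HasCoveringBound.pi fun i => hasCoveringBound_of_ubDim_lt (hE (σ i)) (ht (σ i))).dimH_le

end UpperBoxDim

noncomputable def euclideanBlocks (k n : ℕ) :
    EuclideanSpace ℝ (Fin (k * n)) ≃ₗᵢ[ℝ] PiLp 2 (fun _ : Fin k => EuclideanSpace ℝ (Fin n)) :=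
  (LinearIsometryEquiv.piLpCongrLeft 2 ℝ ℝ
      (finProdFinEquiv.symm.trans (Equiv.sigmaEquivProd _ _).symm)).trans
    (LinearIsometryEquiv.piLpCurry ℝ 2 fun _ _ => ℝ)

lemma IsBesicovitch.nonempty {n : ℕ} (hn : 0 < n) {B : Set (EuclideanSpace ℝ (Fin n))}
    (hB : IsBesicovitch B) : B.Nonempty := by
  obtain ⟨x, hx⟩ := hB.2 (EuclideanSpace.single ⟨0, hn⟩ 1) (by simp)
  exact ⟨x, by simpa using hx 0 (left_mem_Icc.2 zero_le_one)⟩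

lemma IsBesicovitch.exists_segment {n : ℕ} (hn : 0 < n) {B : Set (EuclideanSpace ℝ (Fin n))}
    (hB : IsBesicovitch B) {v : EuclideanSpace ℝ (Fin n)} (hv : ‖v‖ ≤ 1) :
    ∃ x, ∀ t ∈ Icc (0 : ℝ) 1, x + t • v ∈ B := by
  rcases eq_or_ne v 0 with rfl | hv0
  · obtain ⟨b, hb⟩ := hB.nonempty hn
    exact ⟨b, fun t _ => by simpa using hb⟩
  have hv0' : 0 < ‖v‖ := norm_pos_iff.2 hv0
  obtain ⟨x, hx⟩ := hB.2 (‖v‖⁻¹ • v) <| by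
    rw [norm_smul, norm_inv, norm_norm, inv_mul_cancel₀ hv0'.ne']
  refine ⟨x, fun t ht => ?_⟩
  have := hx (t * ‖v‖) ⟨by have := ht.1; positivity, mul_le_one₀ ht.2 hv0'.le hv⟩
  rwa [smul_smul, mul_assoc, mul_inv_cancel₀ hv0'.ne', mul_one] at this

lemma IsBesicovitch.preimage_euclideanBlocks {k n : ℕ} (hn : 0 < n)
    {B : Set (EuclideanSpace ℝ (Fin n))} (hB : IsBesicovitch B) :
    IsBesicovitch (euclideanBlocks k n ⁻¹' (WithLp.ofLp ⁻¹' univ.pi fun _ => B)) := by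
  refine ⟨?_, fun e he => ?_⟩
  · exact (euclideanBlocks k n).toHomeomorph.isCompact_preimage.2 <|
      (PiLp.continuousLinearEquiv 2 ℝ _).toHomeomorph.isCompact_preimage.2 <|
        isCompact_univ_pi fun _ => hB.1
  · choose x hx using fun i => hB.exists_segment hn
      ((PiLp.norm_apply_le (euclideanBlocks k n e) i).trans
        ((euclideanBlocks k n).norm_map e ▸ he.le))
    refine ⟨(euclideanBlocks k n).symm (WithLp.toLp 2 x), fun t ht i _ => ?_⟩
    simpa using hx i t ht

lemma exists_nat_nnreal_mul_add_one_lt {r a : ℝ} (hr : r < a) (ha : 0 < a) :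
    ∃ k : ℕ, 1 ≤ k ∧ ∃ t : ℝ≥0, r < t ∧ k * (t : ℝ) + 1 < k * a := by
  obtain ⟨t, ht⟩ : ∃ t : ℝ≥0, (t : ℝ) = (max r 0 + a) / 2 := ⟨⟨_, by positivity⟩, rfl⟩
  have hta : (t : ℝ) < a := by linarith [max_lt hr ha]
  obtain ⟨k, hk⟩ := exists_nat_gt (1 / (a - t))
  have hk0 : (0 : ℝ) < k := lt_trans (by have := sub_pos.2 hta; positivity) hk
  refine ⟨k, by exact_mod_cast hk0, t, ?_, ?_⟩
  · linarith [le_max_left r 0, max_lt hr ha]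
  · rw [div_lt_iff₀ (sub_pos.2 hta)] at hk; linarith

/-- If for every `k ≥ 1` every Besicovitch set in `ℝ^{k·n}` has Hausdorff dimension at
least `k·n − 1`, then every Besicovitch set `B` in ℝⁿ has packing dimension `n`. -/
theorem besicovitch_pdim_eq_dim
    (n : ℕ) (hn : 2 ≤ n)
    (h : ∀ k : ℕ, 1 ≤ k → ∀ K : Set (EuclideanSpace ℝ (Fin (k * n))),
      IsBesicovitch K → ((k * n : ℕ) : ENNReal) - 1 ≤ dimH K)
    (B : Set (EuclideanSpace ℝ (Fin n))) (hB : IsBesicovitch B) :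
    pdim B = n := by
  have hn0 : 0 < n := by omega
  refine IsLeast.csInf_eq ⟨⟨fun _ => B, subset_iUnion (fun _ => B) 0,
    fun _ => ⟨hB.1.isBounded, ubDim_le_of_isBounded (hB.nonempty hn0) hB.1.isBounded⟩⟩, ?_⟩
  rintro r ⟨E, hBE, hE⟩
  by_contra! hr
  obtain ⟨k, hk, t, hrt, hkt⟩ := exists_nat_nnreal_mul_add_one_lt hr (by exact_mod_cast hn0)
  have hlower := h k hk _ (hB.preimage_euclideanBlocks (k := k) hn0)
  rw [← LinearIsometryEquiv.coe_toIsometryEquiv, IsometryEquiv.dimH_preimage,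
    ← PiLp.coe_continuousLinearEquiv 2 ℝ, ContinuousLinearEquiv.dimH_preimage] at hlower
  have hupper := dimH_pi_le_of_subset_iUnion (ι := Fin k) hBE (fun j => (hE j).1)
    (fun j => (hE j).2.trans_lt hrt)
  have hkn := tsub_le_iff_right.1 (hlower.trans hupper)
  rw [Fintype.card_fin, ← ENNReal.coe_one, ← ENNReal.coe_add, ← ENNReal.coe_natCast,
    ENNReal.coe_le_coe, ← NNReal.coe_le_coe] at hkn
  push_cast at hkn
  linarith
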